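/- arXiv:2107.08800 — 3 statements merged into one kernel-verified Lean document; each statement's English description precedes it below -/
import Mathlib

section
/- Let σ : ℝ → ℝ be monotone (nondecreasing), and let x ∈ ℝⁿ and y ∈ ℝ be fixed. Then the function of the weights w = (w₀, w̄) ∈ ℝ × ℝⁿ given by (w₀, w̄) ↦ |y − σ(⟨w̄, x⟩ + w₀)|, where ⟨w̄, x⟩ = Σⱼ w̄ⱼ xⱼ, is quasiconvex on ℝ × ℝⁿ. -/
private lemma abs_le_max_of_between (y a b t : ℝ) (h1 : min a b ≤ t) (h2 : t ≤ max a b) :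
    |y - t| ≤ max |y - a| |y - b| := by
  rcases abs_cases (y - t) with ⟨he, _⟩ | ⟨he, _⟩
  · rw [he]
    calc y - t ≤ y - min a b := by linarith
    _ ≤ max |y - a| |y - b| := by
        rcases min_cases a b with ⟨hm, _⟩ | ⟨hm, _⟩
        · exact le_trans (by rw [hm]; exact le_abs_self _) (le_max_left _ _)
        · exact le_trans (by rw [hm]; exact le_abs_self _) (le_max_right _ _)
  · rw [he]
    calc -(y - t) ≤ -(y - max a b) := by linarith
    _ ≤ max |y - a| |y - b| := by
        rcases max_cases a b with ⟨hm, _⟩ | ⟨hm, _⟩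
        · exact le_trans (by rw [hm]; exact neg_le_abs _) (le_max_left _ _)
        · exact le_trans (by rw [hm]; exact neg_le_abs _) (le_max_right _ _)

/-- For a nondecreasing activation `σ`, fixed input `x` and desired output `y`,
the absolute error of one neuron, as a function of the weights `(w₀, w̄)`,
is quasiconvex. -/
theorem neuron_abs_error_quasiconvex {n : ℕ} (σ : ℝ → ℝ) (hσ : Monotone σ)
    (x : Fin n → ℝ) (y : ℝ) :
    QuasiconvexOn ℝ (Set.univ : Set (ℝ × (Fin n → ℝ)))
      (fun w => |y - σ (∑ j, w.2 j * x j + w.1)|) := by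
  rw [quasiconvexOn_iff_le_max]
  refine ⟨convex_univ, fun a _ b _ α β hα hβ hab => ?_⟩
  set ℓ : ℝ × (Fin n → ℝ) → ℝ := fun w => ∑ j, w.2 j * x j + w.1 with hℓ
  have hlin : ℓ (α • a + β • b) = α * ℓ a + β * ℓ b := by
    simp only [hℓ, Prod.snd_add, Prod.smul_snd, Prod.fst_add, Prod.smul_fst,
      Pi.add_apply, Pi.smul_apply, smul_eq_mul]
    rw [Finset.sum_congr rfl fun j _ => show (α * a.2 j + β * b.2 j) * x j
        = α * (a.2 j * x j) + β * (b.2 j * x j) by ring,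
      Finset.sum_add_distrib, ← Finset.mul_sum, ← Finset.mul_sum]
    ring
  have hmin : min (ℓ a) (ℓ b) ≤ ℓ (α • a + β • b) := by
    rw [hlin]
    calc min (ℓ a) (ℓ b) = α * min (ℓ a) (ℓ b) + β * min (ℓ a) (ℓ b) := by
          rw [← add_mul, hab, one_mul]
    _ ≤ α * ℓ a + β * ℓ b := by
        gcongr
        · exact min_le_left _ _
        · exact min_le_right _ _
  have hmax : ℓ (α • a + β • b) ≤ max (ℓ a) (ℓ b) := by
    rw [hlin]
    calc α * ℓ a + β * ℓ b ≤ α * max (ℓ a) (ℓ b) + β * max (ℓ a) (ℓ b) := by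
          gcongr
          · exact le_max_left _ _
          · exact le_max_right _ _
    _ = max (ℓ a) (ℓ b) := by rw [← add_mul, hab, one_mul]
  have h1 : min (σ (ℓ a)) (σ (ℓ b)) ≤ σ (ℓ (α • a + β • b)) := by
    rcases min_cases (ℓ a) (ℓ b) with ⟨hm, _⟩ | ⟨hm, _⟩
    · exact le_trans (min_le_left _ _) (hσ (hm ▸ hmin))
    · exact le_trans (min_le_right _ _) (hσ (hm ▸ hmin))
  have h2 : σ (ℓ (α • a + β • b)) ≤ max (σ (ℓ a)) (σ (ℓ b)) := by
    rcases max_cases (ℓ a) (ℓ b) with ⟨hm, _⟩ | ⟨hm, _⟩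
    · exact le_trans (hσ (hm ▸ hmax)) (le_max_left _ _)
    · exact le_trans (hσ (hm ▸ hmax)) (le_max_right _ _)
  exact abs_le_max_of_between y _ _ _ h1 h2
end

section
/- (Main theorem.) Let σ : ℝ → ℝ be monotone (nondecreasing), let N ≥ 1, and let (x¹, y¹), …, (xᴺ, yᴺ) ∈ ℝⁿ × ℝ be a training set. Then the uniform (max-norm) loss function L : ℝ × ℝⁿ → ℝ of a neural network consisting of an input layer and a single output node, L(w₀, w̄) = max_{1 ≤ i ≤ N} |yⁱ − σ(⟨w̄, xⁱ⟩ + w₀)| where ⟨w̄, xⁱ⟩ = Σⱼ w̄ⱼ xⁱⱼ, is quasiconvex on ℝ × ℝⁿ. -/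
/-- Main theorem: the uniform (max-norm) loss of a neural network with an input
layer and a single output node with nondecreasing activation `σ` is quasiconvex
in the weights `(w₀, w̄)`. -/
theorem uniform_loss_quasiconvex {n N : ℕ} (hN : 1 ≤ N) (σ : ℝ → ℝ) (hσ : Monotone σ)
    (x : Fin N → Fin n → ℝ) (y : Fin N → ℝ) :
    QuasiconvexOn ℝ (Set.univ : Set (ℝ × (Fin n → ℝ)))
      (fun w => Finset.univ.sup' (Finset.univ_nonempty_iff.mpr ⟨⟨0, hN⟩⟩)
        fun i => |y i - σ (∑ j, w.2 j * x i j + w.1)|) := by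
  rw [quasiconvexOn_iff_le_max]
  refine ⟨convex_univ, fun u _ v _ a b ha hb hab => ?_⟩
  rw [Finset.sup'_le_iff]
  intro i _
  set t : ℝ × (Fin n → ℝ) → ℝ := fun w => ∑ j, w.2 j * x i j + w.1 with ht
  have pull : ∀ (c : ℝ) (w : ℝ × (Fin n → ℝ)),
      ∑ j, c * w.2 j * x i j = c * ∑ j, w.2 j * x i j := fun c w => by
    rw [Finset.mul_sum]; exact Finset.sum_congr rfl fun j _ => mul_assoc _ _ _
  have key : t (a • u + b • v) = a * t u + b * t v := by
    simp only [ht, Prod.fst_add, Prod.snd_add, Prod.smul_fst, Prod.smul_snd, Pi.add_apply,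
      Pi.smul_apply, smul_eq_mul, add_mul, Finset.sum_add_distrib, pull]
    ring
  have hmem : |y i - σ (t (a • u + b • v))| ≤ max |y i - σ (t u)| |y i - σ (t v)| := by
    rcases le_total (t u) (t v) with h | h
    · have e1 : a * t u + b * t u = t u := by rw [← add_mul, hab, one_mul]
      have e2 : a * t v + b * t v = t v := by rw [← add_mul, hab, one_mul]
      have m1 := mul_le_mul_of_nonneg_left h hb
      have m2 := mul_le_mul_of_nonneg_left h ha
      have h1 : t u ≤ t (a • u + b • v) := by rw [key]; linarith
      have h2 : t (a • u + b • v) ≤ t v := by rw [key]; linarith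
      have := abs_le_max_abs_abs (sub_le_sub_left (hσ h2) (y i))
        (sub_le_sub_left (hσ h1) (y i))
      simpa [max_comm] using this
    · have e1 : a * t u + b * t u = t u := by rw [← add_mul, hab, one_mul]
      have e2 : a * t v + b * t v = t v := by rw [← add_mul, hab, one_mul]
      have m1 := mul_le_mul_of_nonneg_left h hb
      have m2 := mul_le_mul_of_nonneg_left h ha
      have h1 : t v ≤ t (a • u + b • v) := by rw [key]; linarith
      have h2 : t (a • u + b • v) ≤ t u := by rw [key]; linarith
      exact abs_le_max_abs_abs (sub_le_sub_left (hσ h2) (y i))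
        (sub_le_sub_left (hσ h1) (y i))
  refine hmem.trans (max_le_max ?_ ?_)
  · exact Finset.le_sup' (fun i => |y i - σ (∑ j, u.2 j * x i j + u.1)|) (Finset.mem_univ i)
  · exact Finset.le_sup' (fun i => |y i - σ (∑ j, v.2 j * x i j + v.1)|) (Finset.mem_univ i)
end

section
/- (Multi-output generalization.) Let σ : ℝ → ℝ be monotone (nondecreasing), let N ≥ 1 and m ≥ 1, and let (x¹, y¹), …, (xᴺ, yᴺ) ∈ ℝⁿ × ℝᵐ be a training set. For a weight matrix W ∈ ℝ^{m×(n+1)} with rows (w_{j0}, w̄ⱼ) ∈ ℝ × ℝⁿ, define the loss L(W) = max_{1 ≤ i ≤ N} max_{1 ≤ j ≤ m} |yⁱⱼ − σ(⟨w̄ⱼ, xⁱ⟩ + w_{j0})|. Then L is quasiconvex as a function of W on ℝ^{m×(n+1)}. -/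
lemma abs_sub_between {c u v t : ℝ} (h1 : u ≤ t) (h2 : t ≤ v) :
    |c - t| ≤ max |c - u| |c - v| := by
  rw [abs_le]
  constructor
  · have : -(c - t) ≤ -(c - v) := by linarith
    have h3 : -(c - v) ≤ |c - v| := neg_le_abs _
    have : -(c - t) ≤ max |c - u| |c - v| := le_trans (le_trans this h3) (le_max_right _ _)
    linarith
  · have : c - t ≤ c - u := by linarith
    exact le_trans (le_trans this (le_abs_self _)) (le_max_left _ _)

/-- Multi-output generalization: for a network with `m` output nodes with
nondecreasing activation `σ`, the uniform (max-norm) loss is quasiconvex as a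
function of the weight matrix `W`, whose `j`-th row is the pair
`(W j).1 = w_{j0}` (bias) together with `(W j).2 = w̄ⱼ`. -/
theorem uniform_loss_quasiconvex_multi {n N m : ℕ} (hN : 1 ≤ N) (hm : 1 ≤ m)
    (σ : ℝ → ℝ) (hσ : Monotone σ)
    (x : Fin N → Fin n → ℝ) (y : Fin N → Fin m → ℝ) :
    QuasiconvexOn ℝ (Set.univ : Set (Fin m → ℝ × (Fin n → ℝ)))
      (fun W => Finset.univ.sup' (Finset.univ_nonempty_iff.mpr ⟨⟨0, hN⟩⟩)
        fun i => Finset.univ.sup' (Finset.univ_nonempty_iff.mpr ⟨⟨0, hm⟩⟩)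
          fun j => |y i j - σ (∑ k, (W j).2 k * x i k + (W j).1)|) := by
  rw [quasiconvexOn_iff_le_max]
  refine ⟨convex_univ, fun W _ V _ a b ha hb hab => ?_⟩
  apply Finset.sup'_le
  intro i _
  apply Finset.sup'_le
  intro j _
  -- the preactivation is affine in W
  set ℓ : (Fin m → ℝ × (Fin n → ℝ)) → ℝ :=
    fun U => ∑ k, (U j).2 k * x i k + (U j).1 with hℓ
  have key : ℓ (a • W + b • V) = a * ℓ W + b * ℓ V := by
    simp only [hℓ, Pi.add_apply, Pi.smul_apply, Prod.fst_add, Prod.snd_add,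
      Prod.smul_fst, Prod.smul_snd, Pi.add_apply, Pi.smul_apply, smul_eq_mul]
    have hs : ∑ k, (a * (W j).2 k + b * (V j).2 k) * x i k
        = a * ∑ k, (W j).2 k * x i k + b * ∑ k, (V j).2 k * x i k := by
      rw [Finset.mul_sum, Finset.mul_sum, ← Finset.sum_add_distrib]
      exact Finset.sum_congr rfl fun k _ => by ring
    rw [hs]; ring
  have hbound : |y i j - σ (ℓ (a • W + b • V))| ≤
      max |y i j - σ (ℓ W)| |y i j - σ (ℓ V)| := by
    rw [key]
    have eW : ℓ W = a * ℓ W + b * ℓ W := by rw [← add_mul, hab, one_mul]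
    have eV : ℓ V = a * ℓ V + b * ℓ V := by rw [← add_mul, hab, one_mul]
    rcases le_total (ℓ W) (ℓ V) with h | h
    · have h1 : ℓ W ≤ a * ℓ W + b * ℓ V := by
        nlinarith [mul_le_mul_of_nonneg_left h hb]
      have h2 : a * ℓ W + b * ℓ V ≤ ℓ V := by
        nlinarith [mul_le_mul_of_nonneg_left h ha]
      exact abs_sub_between (hσ h1) (hσ h2)
    · have h1 : ℓ V ≤ a * ℓ W + b * ℓ V := by
        nlinarith [mul_le_mul_of_nonneg_left h ha]
      have h2 : a * ℓ W + b * ℓ V ≤ ℓ W := by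
        nlinarith [mul_le_mul_of_nonneg_left h hb]
      exact (abs_sub_between (hσ h1) (hσ h2)).trans (by rw [max_comm])
  simp only [hℓ] at hbound
  refine hbound.trans (max_le_max ?_ ?_)
  · exact le_trans
      (Finset.le_sup' (fun j' => |y i j' - σ (∑ k, (W j').2 k * x i k + (W j').1)|)
        (Finset.mem_univ j))
      (Finset.le_sup'
        (fun i' => Finset.univ.sup' (Finset.univ_nonempty_iff.mpr ⟨⟨0, hm⟩⟩)
          fun j' => |y i' j' - σ (∑ k, (W j').2 k * x i' k + (W j').1)|)
        (Finset.mem_univ i))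
  · exact le_trans
      (Finset.le_sup' (fun j' => |y i j' - σ (∑ k, (V j').2 k * x i k + (V j').1)|)
        (Finset.mem_univ j))
      (Finset.le_sup'
        (fun i' => Finset.univ.sup' (Finset.univ_nonempty_iff.mpr ⟨⟨0, hm⟩⟩)
          fun j' => |y i' j' - σ (∑ k, (V j').2 k * x i' k + (V j').1)|)
        (Finset.mem_univ i))
end
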